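/- Let h ∈ K̄[z] be nonzero with a total part-p-th-power decomposition h = q^p + ρ, meaning ρ consists only of terms whose degree is not divisible by p. Then this decomposition is good: either v(ρ) − v(h) ≥ p·v(p)/(p−1), or no part-p-th-power decomposition h = q₁^p + ρ₁ satisfies v(ρ₁) > v(ρ). -/

import Mathlib

/-!
Suppose `h = q₁ ^ p + ρ₁` with `v(ρ₁) > v(ρ)`, and let `ζ` be a primitive `p`-th root of unity.
Then `δ = ρ - ρ₁ = q₁ ^ p - q ^ p = ∏ j < p, (q₁ - ζ ^ j q)`, and the last coefficient of `δ` of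
minimal valuation sits where that of `ρ` does, at an index prime to `p` because `ρ` is total.
The factors differ pairwise by `(ζ ^ k - ζ ^ j) q`, of valuation at least `v(ζ - 1) + v(q)`. If one
factor had smaller Gauss valuation, all factors would share its last minimal coefficient, which
would then sit at an index divisible by `p` in the product. Hence every factor has valuation at
least `v(ζ - 1) + v(q)`, and `v(ρ) = v(δ) ≥ p v(ζ - 1) + p v(q) ≥ p v(ζ - 1) + v(h)`, the last step
because the last minimal coefficient of `q ^ p` survives in `h`. Finally
`(p - 1) v(ζ - 1) = v(p)`, as `p = ∏ 0 < j < p, (1 - ζ ^ j)` with factors of equal valuation.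
-/

open Polynomial
open scoped Classical

/-- An additive ℚ-valued valuation on a field `K`, recorded as a bare function with
the valuation axioms imposed only at nonzero elements (the value at `0` is junk). -/
structure AddVal (K : Type*) [Field K] where
  v : K → ℚ
  map_one : v 1 = 0
  map_mul : ∀ x y : K, x ≠ 0 → y ≠ 0 → v (x * y) = v x + v y
  add_ge : ∀ x y : K, x ≠ 0 → y ≠ 0 → x + y ≠ 0 → min (v x) (v y) ≤ v (x + y)

variable {K : Type*} [Field K]

/-- The Gauss valuation of a polynomial: the minimum of the valuations of its
(nonzero) coefficients, with junk value `0` at the zero polynomial. -/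
noncomputable def AddVal.gauss (w : AddVal K) (h : K[X]) : ℚ :=
  if hh : h = 0 then 0
  else h.support.inf' (Polynomial.support_nonempty.mpr hh) fun i => w.v (h.coeff i)

/-- Gauss valuation valued in `ℚ ∪ {∞}`, taking the value `⊤` at the zero polynomial. -/
noncomputable def AddVal.gaussT (w : AddVal K) (h : K[X]) : WithTop ℚ :=
  if h = 0 then ⊤ else (w.gauss h : WithTop ℚ)

/-- The quantity `t = v(ρ) - v(h) ∈ ℚ ∪ {∞}` attached to a
part-`p`-th-power decomposition `h = q^p + ρ` (it is `⊤` when `ρ = 0`). -/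
noncomputable def AddVal.tdiff (w : AddVal K) (h ρ : K[X]) : WithTop ℚ :=
  if ρ = 0 then ⊤ else ((w.gauss ρ - w.gauss h : ℚ) : WithTop ℚ)

/-- `h = q ^ p + ρ` is a part-`p`-th-power decomposition (`deg q ≤ ⌊deg h / p⌋`). -/
def IsPartDecomp (p : ℕ) (h q ρ : K[X]) : Prop :=
  h = q ^ p + ρ ∧ q.natDegree ≤ h.natDegree / p

/-- The threshold `p·v(p)/(p-1)`. -/
noncomputable def pBound (w : AddVal K) (p : ℕ) : ℚ :=
  (p : ℚ) * w.v (p : K) / ((p : ℚ) - 1)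

/-- A part-`p`-th-power decomposition is good if `t ≥ p·v(p)/(p-1)` or if no
decomposition achieves a strictly larger value of `t = v(ρ) - v(h)`. -/
def IsGoodDecomp (w : AddVal K) (p : ℕ) (h q ρ : K[X]) : Prop :=
  IsPartDecomp p h q ρ ∧
    (((pBound w p : ℚ) : WithTop ℚ) ≤ w.tdiff h ρ ∨
      ∀ q₁ ρ₁ : K[X], IsPartDecomp p h q₁ ρ₁ → w.tdiff h ρ₁ ≤ w.tdiff h ρ)

open Finset

theorem IsPrimitiveRoot.pow_sub_pow_eq_prod_range {R : Type*} [CommRing R] [IsDomain R] {ζ : R}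
    {n : ℕ} (hζ : IsPrimitiveRoot ζ n) (hn : 0 < n) (x y : R) :
    x ^ n - y ^ n = ∏ i ∈ range n, (x - ζ ^ i * y) := by
  simpa [eval_prod] using congrArg (eval x) (X_pow_sub_C_eq_prod hζ hn (rfl : y ^ n = y ^ n))

namespace AddValuation

section RootsOfUnity

variable {R Γ₀ : Type*} [CommRing R] [LinearOrderedAddCommMonoidWithTop Γ₀]
  (v : AddValuation R Γ₀)

theorem map_prod {ι : Type*} (s : Finset ι) (f : ι → R) :
    v (∏ i ∈ s, f i) = ∑ i ∈ s, v (f i) := by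
  induction s using Finset.induction_on with
  | empty => simp
  | insert i s hi ih => rw [prod_insert hi, sum_insert hi, v.map_mul, ih]

theorem map_nonneg_of_pow_eq_one {ζ : R} {n : ℕ} (hn : n ≠ 0) (hζ : ζ ^ n = 1) : 0 ≤ v ζ := by
  rw [← nsmul_nonneg_iff hn, ← v.map_pow, hζ, v.map_one]

theorem map_sub_one_le_map_pow_sub_one {x : R} (hx : 0 ≤ v x) (n : ℕ) :
    v (x - 1) ≤ v (x ^ n - 1) := by
  rw [← geom_sum_mul, v.map_mul]
  refine le_add_of_nonneg_left (v.map_le_sum fun i _ => ?_)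
  rw [v.map_pow]
  exact nsmul_nonneg hx i

theorem map_sub_one_le_map_pow_sub_pow {x : R} (hx : 0 ≤ v x) (j k : ℕ) :
    v (x - 1) ≤ v (x ^ j - x ^ k) := by
  wlog hkj : k ≤ j generalizing j k
  · rw [v.map_sub_swap (x ^ j)]
    exact this k j (by omega)
  obtain ⟨d, rfl⟩ := Nat.exists_eq_add_of_le hkj
  rw [pow_add, ← mul_sub_one, v.map_mul, v.map_pow]
  exact le_add_of_nonneg_of_le (nsmul_nonneg hx k) (v.map_sub_one_le_map_pow_sub_one hx d)

variable [IsDomain R] {ζ : R}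

theorem map_pow_sub_one_eq {n a : ℕ} [NeZero n] (hζ : IsPrimitiveRoot ζ n) (ha : a.Coprime n) :
    v (ζ ^ a - 1) = v (ζ - 1) := by
  have hζ0 : 0 ≤ v ζ := v.map_nonneg_of_pow_eq_one (NeZero.ne n) hζ.pow_eq_one
  have hζa0 : 0 ≤ v (ζ ^ a) := by
    rw [v.map_pow]
    exact nsmul_nonneg hζ0 a
  obtain ⟨b, -, hb⟩ := (hζ.pow_of_coprime a ha).eq_pow_of_pow_eq_one hζ.pow_eq_one
  refine le_antisymm ?_ (v.map_sub_one_le_map_pow_sub_one hζ0 a)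
  simpa only [hb] using v.map_sub_one_le_map_pow_sub_one hζa0 b

theorem map_natCast_eq_nsmul_map_sub_one {p : ℕ} (hp : p.Prime) (hζ : IsPrimitiveRoot ζ p) :
    v (p : R) = (p - 1) • v (ζ - 1) := by
  obtain ⟨n, rfl⟩ : ∃ n, p = n + 1 := ⟨p - 1, (Nat.sub_add_cancel hp.one_le).symm⟩
  have hcop : ∀ k ∈ range n, (k + 1).Coprime (n + 1) := fun k hk =>
    (Nat.coprime_of_lt_prime k.succ_ne_zero (by simpa using hk) hp).symm
  rw [Nat.cast_succ, ← hζ.prod_one_sub_pow_eq_order, v.map_prod,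
    sum_congr rfl fun k hk => (v.map_sub_swap _ _).trans (v.map_pow_sub_one_eq hζ (hcop k hk)),
    sum_const, card_range, Nat.add_sub_cancel]

end RootsOfUnity

section Gauss

variable {R Γ : Type*} [CommRing R] [AddCommGroup Γ] [LinearOrder Γ] [IsOrderedAddMonoid Γ]
  (v : AddValuation R (WithTop Γ))

def gauss (f : R[X]) : WithTop Γ :=
  f.support.inf fun i => v (f.coeff i)

variable {v}

theorem le_gauss_iff {f : R[X]} {c : WithTop Γ} : c ≤ v.gauss f ↔ ∀ i, c ≤ v (f.coeff i) := by
  refine Finset.le_inf_iff.trans ⟨fun h i => ?_, fun h i _ => h i⟩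
  by_cases hi : i ∈ f.support
  · exact h i hi
  · rw [notMem_support_iff.mp hi, v.map_zero]
    exact le_top

theorem gauss_le_map_coeff (f : R[X]) (i : ℕ) : v.gauss f ≤ v (f.coeff i) :=
  le_gauss_iff.mp le_rfl i

@[simp]
theorem gauss_neg (f : R[X]) : v.gauss (-f) = v.gauss f := by
  simp [gauss, AddValuation.map_neg]

theorem add_gauss_le_gauss_mul (f g : R[X]) : v.gauss f + v.gauss g ≤ v.gauss (f * g) :=
  le_gauss_iff.mpr fun i => by
    rw [coeff_mul]
    refine v.map_le_sum fun x _ => ?_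
    rw [v.map_mul]
    exact add_le_add (gauss_le_map_coeff f x.1) (gauss_le_map_coeff g x.2)

theorem map_add_gauss_le_gauss_C_mul (a : R) (f : R[X]) : v a + v.gauss f ≤ v.gauss (C a * f) :=
  le_gauss_iff.mpr fun i => by
    rw [coeff_C_mul, v.map_mul]
    exact add_le_add le_rfl (gauss_le_map_coeff f i)

/-- Over a valued field, `m` is the degree of the reduction of `f / f.coeff m`. -/
structure IsLastMinCoeff (v : AddValuation R (WithTop Γ)) (f : R[X]) (γ : Γ) (m : ℕ) : Prop where
  map_coeff_eq : v (f.coeff m) = γ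
  le_map_coeff : ∀ i, (γ : WithTop Γ) ≤ v (f.coeff i)
  lt_map_coeff : ∀ i, m < i → (γ : WithTop Γ) < v (f.coeff i)

theorem exists_isLastMinCoeff {f : R[X]} {γ : Γ} (hγ : v.gauss f = γ) :
    ∃ m, IsLastMinCoeff v f γ m := by
  have hf : f.support.Nonempty := by
    by_contra h
    simp [gauss, not_nonempty_iff_eq_empty.mp h] at hγ
  obtain ⟨i, hi, hfi⟩ := f.support.exists_mem_eq_inf hf fun i => v (f.coeff i)
  set S := f.support.filter fun i => v (f.coeff i) = γ
  have hS : S.Nonempty := ⟨i, mem_filter.mpr ⟨hi, by rw [← hfi, ← hγ, gauss]⟩⟩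
  have hle : ∀ i, (γ : WithTop Γ) ≤ v (f.coeff i) := fun i => hγ ▸ gauss_le_map_coeff f i
  refine ⟨S.max' hS, (mem_filter.mp (S.max'_mem hS)).2, hle, fun j hj => ?_⟩
  refine (hle j).lt_of_ne fun hj' => hj.not_ge (S.le_max' j (mem_filter.mpr ⟨?_, hj'.symm⟩))
  rw [mem_support_iff]
  rintro h0
  simp [h0] at hj'

namespace IsLastMinCoeff

variable {f g : R[X]} {γ γ' : Γ} {m m' : ℕ}

theorem gauss_eq (h : IsLastMinCoeff v f γ m) : v.gauss f = γ :=
  le_antisymm (h.map_coeff_eq ▸ gauss_le_map_coeff f m) (le_gauss_iff.mpr h.le_map_coeff)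

theorem unique (h : IsLastMinCoeff v f γ m) (h' : IsLastMinCoeff v f γ' m') : m = m' := by
  have hγ : (γ : WithTop Γ) = γ' := h.gauss_eq.symm.trans h'.gauss_eq
  rcases lt_trichotomy m m' with hm | hm | hm
  · exact absurd h'.map_coeff_eq (hγ ▸ h.lt_map_coeff m' hm).ne'
  · exact hm
  · exact absurd h.map_coeff_eq (hγ ▸ h'.lt_map_coeff m hm).ne'

theorem add_of_lt_gauss (h : IsLastMinCoeff v f γ m) (hg : (γ : WithTop Γ) < v.gauss g) :
    IsLastMinCoeff v (f + g) γ m := by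
  have hlt : ∀ i, (γ : WithTop Γ) < v (g.coeff i) := fun i => hg.trans_le (gauss_le_map_coeff g i)
  refine ⟨?_, fun i => ?_, fun i hi => ?_⟩
  · rw [coeff_add, v.map_add_eq_of_lt_left (h.map_coeff_eq ▸ hlt m), h.map_coeff_eq]
  · rw [coeff_add]
    exact v.map_le_add (h.le_map_coeff i) (hlt i).le
  · rw [coeff_add]
    exact v.map_lt_add (h.lt_map_coeff i hi) (hlt i)

theorem sub_of_lt_gauss (h : IsLastMinCoeff v f γ m) (hg : (γ : WithTop Γ) < v.gauss g) :
    IsLastMinCoeff v (f - g) γ m := by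
  simpa only [sub_eq_add_neg] using h.add_of_lt_gauss (g := -g) (by rwa [gauss_neg])

theorem one : IsLastMinCoeff v 1 0 0 := by
  refine ⟨by simp, fun i => ?_, fun i hi => ?_⟩ <;> rcases eq_or_ne i 0 with rfl | hi' <;>
    simp_all [coeff_one]

theorem mul (hf : IsLastMinCoeff v f γ m) (hg : IsLastMinCoeff v g γ' m') :
    IsLastMinCoeff v (f * g) (γ + γ') (m + m') := by
  have hle : ∀ a b, ((γ + γ' : Γ) : WithTop Γ) ≤ v (f.coeff a * g.coeff b) := fun a b => by
    rw [v.map_mul, WithTop.coe_add]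
    exact add_le_add (hf.le_map_coeff a) (hg.le_map_coeff b)
  have hlt : ∀ a b, m < a ∨ m' < b → ((γ + γ' : Γ) : WithTop Γ) < v (f.coeff a * g.coeff b) := by
    rintro a b (ha | hb) <;> rw [v.map_mul, WithTop.coe_add]
    · exact WithTop.add_lt_add_of_lt_of_le WithTop.coe_ne_top (hf.lt_map_coeff a ha)
        (hg.le_map_coeff b)
    · exact WithTop.add_lt_add_of_le_of_lt WithTop.coe_ne_top (hf.le_map_coeff a)
        (hg.lt_map_coeff b hb)
  refine ⟨?_, fun i => ?_, fun i hi => ?_⟩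
  · have hmem : (m, m') ∈ antidiagonal (m + m') := HasAntidiagonal.mem_antidiagonal.mpr rfl
    have hcorner : v (f.coeff m * g.coeff m') = ((γ + γ' : Γ) : WithTop Γ) := by
      rw [v.map_mul, hf.map_coeff_eq, hg.map_coeff_eq, WithTop.coe_add]
    rw [coeff_mul, ← add_sum_erase _ _ hmem, v.map_add_eq_of_lt_left, hcorner]
    refine hcorner ▸ v.map_lt_sum WithTop.coe_ne_top fun x hx => hlt x.1 x.2 ?_
    obtain ⟨hne, hx⟩ := mem_erase.mp hx
    rw [HasAntidiagonal.mem_antidiagonal] at hx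
    by_contra! hle
    exact hne (Prod.ext (by omega) (by omega))
  · rw [coeff_mul]
    exact v.map_le_sum fun x _ => hle x.1 x.2
  · rw [coeff_mul]
    refine v.map_lt_sum WithTop.coe_ne_top fun x hx => hlt x.1 x.2 ?_
    rw [HasAntidiagonal.mem_antidiagonal] at hx
    omega

theorem prod {ι : Type*} {s : Finset ι} {F : ι → R[X]} {γ : ι → Γ} {m : ι → ℕ}
    (h : ∀ i ∈ s, IsLastMinCoeff v (F i) (γ i) (m i)) :
    IsLastMinCoeff v (∏ i ∈ s, F i) (∑ i ∈ s, γ i) (∑ i ∈ s, m i) := by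
  induction s using Finset.induction_on with
  | empty => simpa using one
  | insert i s hi ih =>
    rw [prod_insert hi, sum_insert hi, sum_insert hi]
    exact (h i (mem_insert_self i s)).mul (ih fun j hj => h j (mem_insert_of_mem hj))

theorem prod_const {ι : Type*} {s : Finset ι} {F : ι → R[X]}
    (h : ∀ i ∈ s, IsLastMinCoeff v (F i) γ m) :
    IsLastMinCoeff v (∏ i ∈ s, F i) (#s • γ) (#s * m) := by
  simpa only [sum_const, smul_eq_mul] using prod h

theorem pow (h : IsLastMinCoeff v f γ m) (n : ℕ) : IsLastMinCoeff v (f ^ n) (n • γ) (n * m) := by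
  simpa using prod_const (s := range n) fun _ _ => h

end IsLastMinCoeff

theorem sum_gauss_le_gauss_prod {ι : Type*} (s : Finset ι) (f : ι → R[X]) :
    ∑ i ∈ s, v.gauss (f i) ≤ v.gauss (∏ i ∈ s, f i) := by
  induction s using Finset.induction_on with
  | empty => simp [IsLastMinCoeff.one.gauss_eq]
  | insert i s hi ih =>
    rw [prod_insert hi, sum_insert hi]
    exact (add_le_add le_rfl ih).trans (add_gauss_le_gauss_mul _ _)

theorem gauss_pow_add_le_nsmul_gauss {p : ℕ} (hp : p ≠ 0) {q ρ : R[X]}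
    (htotal : ∀ i, p ∣ i → ρ.coeff i = 0) : v.gauss (q ^ p + ρ) ≤ p • v.gauss q := by
  rcases eq_or_ne (v.gauss q) ⊤ with hq | hq
  · obtain ⟨n, rfl⟩ := Nat.exists_eq_succ_of_ne_zero hp
    rw [hq, succ_nsmul, WithTop.add_top]
    exact le_top
  obtain ⟨γ, hγ⟩ := WithTop.ne_top_iff_exists.mp hq
  obtain ⟨m, hm⟩ := exists_isLastMinCoeff hγ.symm
  calc v.gauss (q ^ p + ρ) ≤ v ((q ^ p + ρ).coeff (p * m)) := gauss_le_map_coeff _ _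
    _ = p • v.gauss q := by
      rw [coeff_add, htotal _ (dvd_mul_right p m), add_zero, (hm.pow p).map_coeff_eq, ← hγ,
        WithTop.coe_nsmul]

theorem exists_isLastMinCoeff_prod_or_nsmul_le_gauss_prod {ι : Type*} (s : Finset ι)
    (f : ι → R[X]) {c : WithTop Γ} (hclose : ∀ j ∈ s, ∀ k ∈ s, c ≤ v.gauss (f j - f k)) :
    (∃ γ m, IsLastMinCoeff v (∏ j ∈ s, f j) (#s • γ) (#s * m)) ∨
      #s • c ≤ v.gauss (∏ j ∈ s, f j) := by
  by_cases h : ∃ j₀ ∈ s, v.gauss (f j₀) < c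
  · obtain ⟨j₀, hj₀, hlt⟩ := h
    obtain ⟨γ, hγ⟩ := WithTop.ne_top_iff_exists.mp (hlt.trans_le le_top).ne
    obtain ⟨m, hm⟩ := exists_isLastMinCoeff hγ.symm
    refine Or.inl ⟨γ, m, IsLastMinCoeff.prod_const fun j hj => ?_⟩
    simpa using hm.add_of_lt_gauss (g := f j - f j₀) (hγ ▸ hlt.trans_le (hclose j hj j₀ hj₀))
  · push Not at h
    exact Or.inr ((card_nsmul_le_sum s _ c h).trans (sum_gauss_le_gauss_prod s f))

theorem nsmul_map_sub_one_add_gauss_le_gauss [IsDomain R] {p : ℕ} {ζ : R} (hp : p.Prime)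
    (hζ : IsPrimitiveRoot ζ p) {h q q₁ ρ ρ₁ : R[X]} (hd : h = q ^ p + ρ) (hd₁ : h = q₁ ^ p + ρ₁)
    (htotal : ∀ i, p ∣ i → ρ.coeff i = 0) (hlt : v.gauss ρ < v.gauss ρ₁) :
    p • v (ζ - 1) + v.gauss h ≤ v.gauss ρ := by
  obtain ⟨γ, hγ⟩ := WithTop.ne_top_iff_exists.mp (hlt.trans_le le_top).ne
  obtain ⟨m, hρ⟩ := exists_isLastMinCoeff hγ.symm
  have hm : ¬ p ∣ m := fun hpm => by simpa [htotal m hpm] using hρ.map_coeff_eq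
  have hδ : IsLastMinCoeff v (∏ j ∈ range p, (q₁ - C ζ ^ j * q)) γ m := by
    rw [← (hζ.map_of_injective C_injective).pow_sub_pow_eq_prod_range hp.pos]
    convert hρ.sub_of_lt_gauss (hγ ▸ hlt) using 1
    linear_combination hd - hd₁
  have hζ0 : 0 ≤ v ζ := v.map_nonneg_of_pow_eq_one hp.ne_zero hζ.pow_eq_one
  have hclose : ∀ j ∈ range p, ∀ k ∈ range p, v (ζ - 1) + v.gauss q ≤
      v.gauss ((q₁ - C ζ ^ j * q) - (q₁ - C ζ ^ k * q)) := fun j _ k _ => by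
    rw [show (q₁ - C ζ ^ j * q) - (q₁ - C ζ ^ k * q) = C (ζ ^ k - ζ ^ j) * q by
      rw [C_sub, C_pow, C_pow]; ring]
    exact (add_le_add (v.map_sub_one_le_map_pow_sub_pow hζ0 k j) le_rfl).trans
      (map_add_gauss_le_gauss_C_mul _ _)
  rcases exists_isLastMinCoeff_prod_or_nsmul_le_gauss_prod _ _ hclose with ⟨γ', m', hδ'⟩ | hle
  · exact absurd ⟨m', by rw [hδ.unique hδ', card_range]⟩ hm
  · rw [card_range, hδ.gauss_eq, hγ, nsmul_add] at hle
    exact (add_le_add le_rfl (hd ▸ gauss_pow_add_le_nsmul_gauss hp.ne_zero htotal)).trans hle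

end Gauss

end AddValuation

namespace AddVal

variable (w : AddVal K)

noncomputable def toAddValuation : AddValuation K (WithTop ℚ) :=
  AddValuation.of (fun x => if x = 0 then ⊤ else (w.v x : WithTop ℚ)) (if_pos rfl)
    (by simp [w.map_one])
    (fun x y => by
      by_cases hx : x = 0
      · simp [hx]
      by_cases hy : y = 0
      · simp [hy]
      by_cases hxy : x + y = 0
      · simp [hxy]
      simpa [hx, hy, hxy] using w.add_ge x y hx hy hxy)
    (fun x y => by
      by_cases hx : x = 0
      · simp [hx]
      by_cases hy : y = 0
      · simp [hy]
      simp [hx, hy, w.map_mul x y hx hy])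

theorem toAddValuation_apply {x : K} (hx : x ≠ 0) : w.toAddValuation x = w.v x := by
  simp [toAddValuation, AddValuation.of_apply, hx]

theorem gaussT_eq_gauss_toAddValuation (f : K[X]) : w.gaussT f = w.toAddValuation.gauss f := by
  by_cases hf : f = 0
  · simp [gaussT, AddValuation.gauss, hf]
  rw [gaussT, if_neg hf, AddVal.gauss, dif_neg hf, Finset.coe_inf']
  exact Finset.inf_congr rfl fun i hi => (w.toAddValuation_apply (mem_support_iff.mp hi)).symm

theorem tdiff_add_gauss (h ρ : K[X]) : w.tdiff h ρ + w.gauss h = w.gaussT ρ := by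
  by_cases hρ : ρ = 0 <;> simp [tdiff, gaussT, hρ]

theorem tdiff_lt_tdiff_iff {h ρ ρ₁ : K[X]} :
    w.tdiff h ρ < w.tdiff h ρ₁ ↔ w.gaussT ρ < w.gaussT ρ₁ := by
  rw [← WithTop.add_lt_add_iff_right (WithTop.coe_ne_top (a := w.gauss h)), tdiff_add_gauss,
    tdiff_add_gauss]

theorem le_tdiff_iff {h ρ : K[X]} (hh : h ≠ 0) {c : ℚ} :
    c ≤ w.tdiff h ρ ↔ c + w.gaussT h ≤ w.gaussT ρ := by
  rw [← WithTop.add_le_add_iff_right (WithTop.coe_ne_top (a := w.gauss h)), tdiff_add_gauss,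
    show w.gaussT h = w.gauss h from if_neg hh]

theorem pBound_eq {p : ℕ} (hp : p.Prime) (hpK : (p : K) ≠ 0) {ζ : K}
    (hζ : IsPrimitiveRoot ζ p) : pBound w p = p • w.v (ζ - 1) := by
  have hζ1 : ζ - 1 ≠ 0 := sub_ne_zero.mpr (hζ.ne_one hp.one_lt)
  have hvp : w.v p = (p - 1 : ℕ) • w.v (ζ - 1) := by
    have := w.toAddValuation.map_natCast_eq_nsmul_map_sub_one hp hζ
    rw [w.toAddValuation_apply hpK, w.toAddValuation_apply hζ1] at this
    exact_mod_cast this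
  have hp1 : (p : ℚ) - 1 ≠ 0 := sub_ne_zero.mpr (by exact_mod_cast hp.one_lt.ne')
  rw [pBound, hvp, nsmul_eq_mul, nsmul_eq_mul, Nat.cast_sub hp.one_le, Nat.cast_one]
  field_simp

end AddVal

/-- Corollary 4.8: every total part-`p`-th-power decomposition
(`ρ` has no terms of degree divisible by `p`) is good. -/
theorem statement4 {K : Type*} [Field K] [IsAlgClosed K] (w : AddVal K) (p : ℕ)
    (hp : p.Prime) (hpK : (p : K) ≠ 0)
    (h q ρ : K[X]) (hh : h ≠ 0) (hd : IsPartDecomp p h q ρ)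
    (htotal : ∀ i : ℕ, p ∣ i → ρ.coeff i = 0) :
    IsGoodDecomp w p h q ρ := by
  refine ⟨hd, or_iff_not_imp_right.mpr fun hbest => ?_⟩
  push Not at hbest
  obtain ⟨q₁, ρ₁, hd₁, hlt⟩ := hbest
  have : NeZero (p : K) := ⟨hpK⟩
  obtain ⟨ζ, hζ⟩ := HasEnoughRootsOfUnity.exists_primitiveRoot K p
  simp only [w.tdiff_lt_tdiff_iff, w.gaussT_eq_gauss_toAddValuation] at hlt
  rw [w.le_tdiff_iff hh, w.pBound_eq hp hpK hζ, WithTop.coe_nsmul,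
    ← w.toAddValuation_apply (sub_ne_zero.mpr (hζ.ne_one hp.one_lt)),
    w.gaussT_eq_gauss_toAddValuation, w.gaussT_eq_gauss_toAddValuation]
  exact w.toAddValuation.nsmul_map_sub_one_add_gauss_le_gauss hp hζ hd.1 hd₁.1 htotal hlt
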